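/- For every real u with −1/12 < u < 1/12, the series (1/16)·Σ_{j=0}^{∞} (−1)^{j}·12^{j}·((2j+5)!·(28j+65)/(30·4^{j}·j!·(j+2)!·(2j+5)) − 13·(j+2)·(j+1))·u^{j+1} converges and its sum equals (7u/4)·(1 + 12u)^{−7/2}·(1 − (1 + 12u)/14 − (13/14)·√(1 + 12u)). -/

import Mathlib

/-!
Every piece of `ℰ₄` is a power of `y = 1 + 12u`: with `√y · y^(-7/2) = y^(-3)`,
`ℰ₄(u) = u (7/4 · y^(-7/2) - 1/8 · y^(-5/2) - 13/8 · y^(-3))`.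
Newton's binomial series expands each power as `Σ choose(a, j) (12u)^j` for `|12u| < 1`, and
the generalized binomial coefficients at `a = -7/2, -5/2, -3` are explicit ratios of factorials
whose combination is the stated coefficient.
-/

open Nat

theorem Ring.choose_succ_mul_succ {R : Type*} [Field R] [CharZero R] (a : R) (n : ℕ) :
    Ring.choose a (n + 1) * (n + 1) = Ring.choose a n * (a - n) := by
  simp only [Ring.choose_eq_smul, smul_eq_mul, descPochhammer_succ_right, Polynomial.smeval_mul,
    Polynomial.smeval_sub, Polynomial.smeval_X, Polynomial.smeval_natCast, Nat.factorial_succ,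
    Nat.cast_mul, nsmul_eq_mul]
  field_simp
  push_cast
  ring

theorem Ring.choose_neg_half_odd {R : Type*} [Field R] [CharZero R] (k n : ℕ) :
    Ring.choose (-(2 * k + 1) / 2 : R) n
      = (-1) ^ n * ((2 * (n + k))! * k !) / ((2 * k)! * 4 ^ n * n ! * (n + k)!) := by
  have hfact (m : ℕ) : (m ! : R) ≠ 0 := Nat.cast_ne_zero.2 m.factorial_ne_zero
  induction n with
  | zero => simp [hfact]
  | succ n ih =>
    have hrec := Ring.choose_succ_mul_succ (-(2 * k + 1) / 2 : R) n
    rw [← eq_div_iff n.cast_add_one_ne_zero] at hrec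
    rw [hrec, ih, show 2 * (n + 1 + k) = 2 * (n + k) + 1 + 1 by ring,
      show n + 1 + k = n + k + 1 by ring]
    simp only [Nat.factorial_succ]
    have hnk : ((n + k : ℕ) : R) + 1 ≠ 0 := (n + k).cast_add_one_ne_zero
    push_cast at hnk ⊢
    field_simp
    ring

theorem Ring.choose_neg_natCast_succ {R : Type*} [CommRing R] [BinomialRing R] (k n : ℕ) :
    Ring.choose (-(k + 1) : R) n = (-1) ^ n * (n + k).choose k := by
  rw [Ring.choose_neg, show ((k : R) + 1 + n - 1) = ((n + k : ℕ) : R) by push_cast; ring,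
    Ring.choose_natCast, Nat.choose_symm_add, Int.negOnePow_def, Units.smul_def]
  simp

theorem Real.hasSum_choose_mul_pow (a : ℝ) {x : ℝ} (hx : |x| < 1) :
    HasSum (fun n => Ring.choose a n * x ^ n) ((1 + x) ^ a) := by
  have hx' : x ∈ Metric.eball (0 : ℝ) 1 := by
    simpa [edist_zero_right, enorm_eq_nnnorm, ← NNReal.coe_lt_one] using hx
  simpa [binomialSeries, FormalMultilinearSeries.ofScalars] using
    Real.one_add_rpow_hasFPowerSeriesOnBall_zero.hasSum hx'

theorem genus_two_coeff_eq_choose (j : ℕ) :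
    (1 / 16 : ℝ) * ((-1) ^ j * ((2 * j + 5)! * (28 * (j : ℝ) + 65) /
        (30 * 4 ^ j * j ! * (j + 2)! * (2 * (j : ℝ) + 5)) - 13 * ((j : ℝ) + 2) * ((j : ℝ) + 1)))
      = 7 / 4 * Ring.choose (-7 / 2 : ℝ) j - 1 / 8 * Ring.choose (-5 / 2 : ℝ) j
        - 13 / 8 * Ring.choose (-3 : ℝ) j := by
  rw [show (-7 / 2 : ℝ) = -(2 * (3 : ℕ) + 1) / 2 by norm_num,
    show (-5 / 2 : ℝ) = -(2 * (2 : ℕ) + 1) / 2 by norm_num,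
    show (-3 : ℝ) = -((2 : ℕ) + 1) by norm_num,
    Ring.choose_neg_half_odd, Ring.choose_neg_half_odd, Ring.choose_neg_natCast_succ,
    Nat.cast_choose_two, show 2 * (j + 3) = 2 * (j + 2) + 1 + 1 by ring,
    show 2 * j + 5 = 2 * (j + 2) + 1 by ring, show j + 3 = j + 2 + 1 by ring]
  simp only [Nat.factorial_succ]
  push_cast
  field_simp
  ring

theorem genus_two_closed_form_eq {y : ℝ} (hy : 0 < y) (u : ℝ) :
    (7 * u / 4) * y ^ (-(7 : ℝ) / 2) * (1 - y / 14 - (13 / 14) * Real.sqrt y)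
      = u * (7 / 4 * y ^ (-7 / 2 : ℝ) - 1 / 8 * y ^ (-5 / 2 : ℝ) - 13 / 8 * y ^ (-3 : ℝ)) := by
  have h5 : y ^ (-5 / 2 : ℝ) = y ^ (-7 / 2 : ℝ) * y := by
    rw [← Real.rpow_add_one hy.ne']
    norm_num
  have h3 : y ^ (-3 : ℝ) = y ^ (-7 / 2 : ℝ) * Real.sqrt y := by
    rw [Real.sqrt_eq_rpow, ← Real.rpow_add hy]
    norm_num
  rw [h5, h3, neg_div]
  ring

/-- Power series of the genus-two free-energy derivative `ℰ₄` of the quartic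
matrix model: for `-1/12 < u < 1/12`,
`(1/16) Σ_{j≥0} (-1)^j 12^j ((2j+5)!(28j+65)/(30·4^j·j!(j+2)!(2j+5)) - 13(j+2)(j+1)) u^(j+1)
  = (7u/4)(1 + 12u)^(-7/2)(1 - (1 + 12u)/14 - (13/14)√(1 + 12u))`. -/
theorem genus_two_free_energy_series (u : ℝ)
    (h1 : -1 / 12 < u) (h2 : u < 1 / 12) :
    HasSum
      (fun j : ℕ => (1 / 16 : ℝ) * ((-1 : ℝ) ^ j * 12 ^ j *
        ((Nat.factorial (2 * j + 5) : ℝ) * (28 * (j : ℝ) + 65) /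
            (30 * 4 ^ j * (Nat.factorial j : ℝ) * (Nat.factorial (j + 2) : ℝ) * (2 * (j : ℝ) + 5)) -
          13 * ((j : ℝ) + 2) * ((j : ℝ) + 1)) * u ^ (j + 1)))
      ((7 * u / 4) * (1 + 12 * u) ^ (-(7 : ℝ) / 2) *
        (1 - (1 + 12 * u) / 14 - (13 / 14) * Real.sqrt (1 + 12 * u))) := by
  have hx : |12 * u| < 1 := abs_lt.2 ⟨by linarith, by linarith⟩
  have hseries := ((((Real.hasSum_choose_mul_pow (-7 / 2) hx).mul_left (7 / 4)).sub
    ((Real.hasSum_choose_mul_pow (-5 / 2) hx).mul_left (1 / 8))).sub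
    ((Real.hasSum_choose_mul_pow (-3) hx).mul_left (13 / 8))).mul_left u
  rw [genus_two_closed_form_eq (by linarith) u]
  refine hseries.congr_fun fun j => ?_
  have hcoeff := genus_two_coeff_eq_choose j
  rw [mul_pow, pow_succ]
  linear_combination (12 ^ j * u ^ j * u) * hcoeff
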